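/- Let (H,B₁,B₂) be a Rota-Baxter system of Hopf algebras with cocycle σ, H₁ = Im(σ), and descendent operation ∘. Define T:H₁→H₁ by T(a)=S(B₁(a₁))B₂(a₂). Then (H₁, ∘, 1, Δ|_{H₁}, ε|_{H₁}, T) is a cocommutative Hopf algebra; in particular σ(a₁)∘T(σ(a₂)) = ε(a)1 = T(σ(a₁))∘σ(a₂) for all a∈H. -/

import Mathlib

/-!
Work in the convolution monoid of linear endomorphisms of `H`, where `σ = B₁ ⋆ (S ∘ B₂)` and
`T = (S ∘ B₁) ⋆ B₂`. Cocommutativity makes `S` and convolutions of coalgebra maps coalgebra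
maps, and turns `a ↦ f(a₁) ∘ g(a₂)` into the convolution `(B₁ ∘ f) ⋆ g ⋆ (S ∘ B₂ ∘ f)` whenever
`f` is a coalgebra map. The Rota–Baxter identity with `b = 1` gives `Bᵢ ∘ σ = Bᵢ`; with
`b = T(a₂)` it gives `Bᵢ ⋆ (Bᵢ ∘ T) = ε`, so `Bᵢ ∘ T = S ∘ Bᵢ` by uniqueness of convolution
inverses. Hence `T ∘ σ = T` and `σ ∘ T = T`, so `T` maps `Im σ` to itself, and the two antipode
identities reduce to `B₁ ⋆ SB₁ ⋆ B₂ ⋆ SB₂ = ε` and `SB₁ ⋆ B₁ ⋆ SB₂ ⋆ B₂ = ε`.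
-/

open TensorProduct Coalgebra HopfAlgebra LinearMap

variable {F : Type*} [Field F] {H : Type*} [Ring H] [HopfAlgebra F H]

/-- The descendent operation `a ⊗ b ↦ B₁(a₁) b S(B₂(a₂))` as a linear map on `H ⊗ H`. -/
noncomputable def circL (B₁ B₂ : H →ₗ[F] H) : H ⊗[F] H →ₗ[F] H :=
  (LinearMap.mul' F H)
    ∘ₗ (TensorProduct.map ((LinearMap.mul' F H) ∘ₗ TensorProduct.map B₁ LinearMap.id)
        ((antipode (R := F)) ∘ₗ B₂))
    ∘ₗ (TensorProduct.assoc F H H H).symm.toLinearMap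
    ∘ₗ (TensorProduct.map LinearMap.id (TensorProduct.comm F H H).toLinearMap)
    ∘ₗ (TensorProduct.assoc F H H H).toLinearMap
    ∘ₗ (TensorProduct.map Coalgebra.comul LinearMap.id)

/-- The descendent operation `a ∘ b = B₁(a₁) b S(B₂(a₂))`. -/
noncomputable def circ (B₁ B₂ : H →ₗ[F] H) (a b : H) : H := circL B₁ B₂ (a ⊗ₜ[F] b)

/-- The cocycle `σ = B₁ ∗ (S ∘ B₂)`, i.e. `σ(a) = B₁(a₁) S(B₂(a₂))`. -/
noncomputable def cocycleL (B₁ B₂ : H →ₗ[F] H) : H →ₗ[F] H :=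
  (LinearMap.mul' F H) ∘ₗ (TensorProduct.map B₁ ((antipode (R := F)) ∘ₗ B₂)) ∘ₗ Coalgebra.comul

/-- `(H, B₁, B₂)` is a Rota-Baxter system of Hopf algebras: `B₁, B₂` are coalgebra
homomorphisms sending `1` to `1` such that `Bᵢ(a)Bᵢ(b) = Bᵢ(B₁(a₁) b S(B₂(a₂)))`. -/
noncomputable def IsRBSystem (B₁ B₂ : H →ₗ[F] H) : Prop :=
  (Coalgebra.comul ∘ₗ B₁ = TensorProduct.map B₁ B₁ ∘ₗ Coalgebra.comul) ∧
  (Coalgebra.counit ∘ₗ B₁ = Coalgebra.counit (R := F)) ∧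
  (Coalgebra.comul ∘ₗ B₂ = TensorProduct.map B₂ B₂ ∘ₗ Coalgebra.comul) ∧
  (Coalgebra.counit ∘ₗ B₂ = Coalgebra.counit (R := F)) ∧
  B₁ 1 = 1 ∧ B₂ 1 = 1 ∧
  (∀ a b : H, B₁ a * B₁ b = B₁ (circ B₁ B₂ a b)) ∧
  (∀ a b : H, B₂ a * B₂ b = B₂ (circ B₁ B₂ a b))

/-- The map `T(a) = S(B₁(a₁)) B₂(a₂)` as a linear map on `H`. -/
noncomputable def TL (B₁ B₂ : H →ₗ[F] H) : H →ₗ[F] H :=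
  (LinearMap.mul' F H) ∘ₗ (TensorProduct.map ((antipode (R := F)) ∘ₗ B₁) B₂) ∘ₗ Coalgebra.comul

open WithConv

section Convolution

variable {R C A : Type*} [CommSemiring R]

lemma TensorProduct.toConv_map_one [Semiring A] [Bialgebra R A] :
    (toConv (map (1 : WithConv (A →ₗ[R] A)).ofConv (1 : WithConv (A →ₗ[R] A)).ofConv) :
      WithConv (A ⊗[R] A →ₗ[R] A ⊗[R] A)) = 1 := by
  ext x y
  simp [Algebra.TensorProduct.one_def, Algebra.algebraMap_eq_smul_one, TensorProduct.smul_tmul',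
    smul_smul, mul_comm]

variable [AddCommMonoid C] [Module R C] [Coalgebra R C] [IsCocomm R C] [Semiring A] [Bialgebra R A]

noncomputable def CoalgHom.convMul (f g : C →ₗc[R] A) : C →ₗc[R] A where
  toLinearMap := (toConv f.toLinearMap * toConv g.toLinearMap).ofConv
  counit_comp := by
    rw [← Bialgebra.toLinearMap_counitAlgHom, algHom_comp_convMul_distrib,
      Bialgebra.toLinearMap_counitAlgHom, f.counit_comp, g.counit_comp]
    have h : toConv (counit : C →ₗ[R] R) = 1 := by ext; simp
    rw [h, one_mul, ← h]
  map_comp_comul := by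
    -- `comul : C → C ⊗ C` is a coalgebra map only because `C` is cocommutative
    have hdistrib := convMul_comp_coalgHom_distrib (toConv (map f.toLinearMap f.toLinearMap))
      (toConv (map g.toLinearMap g.toLinearMap)) (comulCoalgHom R C)
    have hmap := TensorProduct.map_convMul_map (f := toConv f.toLinearMap)
      (g := toConv f.toLinearMap) (h := toConv g.toLinearMap) (k := toConv g.toLinearMap)
    simp only at hmap hdistrib
    rw [hmap] at hdistrib
    rw [← Bialgebra.toLinearMap_comulAlgHom, algHom_comp_convMul_distrib,
      Bialgebra.toLinearMap_comulAlgHom, ← f.map_comp_comul, ← g.map_comp_comul]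
    exact hdistrib

end Convolution

section Antipode

variable {R A : Type*} [CommSemiring R] [Semiring A] [HopfAlgebra R A]

lemma CoalgHom.antipode_comp_mul_self {C : Type*} [AddCommMonoid C] [Module R C] [Coalgebra R C]
    (f : C →ₗc[R] A) : toConv (antipode R ∘ₗ f.toLinearMap) * toConv f.toLinearMap = 1 := by
  calc _ = toConv ((toConv (antipode R) * toConv .id : WithConv (A →ₗ[R] A)).ofConv ∘ₗ
          f.toLinearMap) :=
        congrArg toConv (convMul_comp_coalgHom_distrib (toConv (antipode R)) (toConv .id) f).symm
    _ = 1 := by rw [antipode_mul_id]; ext; simp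

lemma CoalgHom.mul_antipode_comp_self {C : Type*} [AddCommMonoid C] [Module R C] [Coalgebra R C]
    (f : C →ₗc[R] A) : toConv f.toLinearMap * toConv (antipode R ∘ₗ f.toLinearMap) = 1 := by
  calc _ = toConv ((toConv .id * toConv (antipode R) : WithConv (A →ₗ[R] A)).ofConv ∘ₗ
          f.toLinearMap) :=
        congrArg toConv (convMul_comp_coalgHom_distrib (toConv .id) (toConv (antipode R)) f).symm
    _ = 1 := by rw [id_mul_antipode]; ext; simp

variable [IsCocomm R A]

lemma HopfAlgebra.map_antipode_comp_comul :
    map (antipode R) (antipode R) ∘ₗ comul = comul ∘ₗ antipode R (A := A) := by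
  have hleft : toConv (map (antipode R) (antipode R) ∘ₗ comul) * toConv (comul (R := R) (A := A))
      = 1 := by
    have h := convMul_comp_coalgHom_distrib (toConv (map (antipode R) (antipode R)))
      (toConv (map LinearMap.id LinearMap.id)) (Coalgebra.comulCoalgHom R A)
    rw [TensorProduct.map_convMul_map, antipode_mul_id, TensorProduct.toConv_map_one,
      convOne_comp_coalgHom, map_id] at h
    exact (congrArg toConv h).symm
  exact congrArg ofConv (left_inv_eq_right_inv hleft comul_right_inv)

variable (R A) in
noncomputable def HopfAlgebra.antipodeCoalgHom : A →ₗc[R] A where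
  toLinearMap := antipode R
  counit_comp := counit_comp_antipode
  map_comp_comul := map_antipode_comp_comul

lemma HopfAlgebra.antipode_comp_antipode :
    antipode R ∘ₗ antipode R = (LinearMap.id : A →ₗ[R] A) :=
  congrArg ofConv <| left_inv_eq_right_inv (antipodeCoalgHom R A).antipode_comp_mul_self
    antipode_mul_id

end Antipode

section RotaBaxter

lemma toConv_cocycleL (B₁ B₂ : H →ₗ[F] H) :
    toConv (cocycleL B₁ B₂) = toConv B₁ * toConv (antipode F ∘ₗ B₂) := rfl

lemma toConv_TL (B₁ B₂ : H →ₗ[F] H) :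
    toConv (TL B₁ B₂) = toConv (antipode F ∘ₗ B₁) * toConv B₂ := rfl

lemma circ_one (B₁ B₂ : H →ₗ[F] H) (a : H) : circ B₁ B₂ a 1 = cocycleL B₁ B₂ a := by
  simp [circ, circL, cocycleL, ← (Coalgebra.Repr.arbitrary F a).eq, TensorProduct.sum_tmul]

lemma circL_comp_map_comul [IsCocomm F H] (B₁ B₂ f g : H →ₗ[F] H)
    (hf : map f f ∘ₗ comul = comul ∘ₗ f) :
    circL B₁ B₂ ∘ₗ map f g ∘ₗ comul =
      (toConv (B₁ ∘ₗ f) * toConv g * toConv (antipode F ∘ₗ B₂ ∘ₗ f)).ofConv := by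
  -- `B₁(f a₁₁) g(a₂) S(B₂(f a₁₂))`: coassociativity, then cocommutativity swaps the last two legs
  simp only [circL, LinearMap.convMul_def, ofConv_toConv, ← hf, coassoc_simps]

section Multiplicative

variable {B₁ B₂ B : H →ₗ[F] H}

lemma comp_cocycleL_of_mul (hB : ∀ a b, B a * B b = B (circ B₁ B₂ a b)) (hB₁ : B 1 = 1) :
    B ∘ₗ cocycleL B₁ B₂ = B := by
  ext a
  simp [← circ_one, ← hB, hB₁]

lemma toConv_mul_toConv_comp_of_mul (hB : ∀ a b, B a * B b = B (circ B₁ B₂ a b))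
    (g : H →ₗ[F] H) :
    toConv B * toConv (B ∘ₗ g) = toConv (B ∘ₗ circL B₁ B₂ ∘ₗ map .id g ∘ₗ comul) := by
  have hmul : mul' F H ∘ₗ map B B = B ∘ₗ circL B₁ B₂ := TensorProduct.ext' hB
  rw [LinearMap.convMul_def, ← comp_assoc _ _ B, ← hmul]
  simp only [coassoc_simps]

end Multiplicative

namespace IsRBSystem

variable {B₁ B₂ : H →ₗ[F] H}

def coalgHom₁ (hRB : IsRBSystem B₁ B₂) : H →ₗc[F] H where
  toLinearMap := B₁
  counit_comp := hRB.2.1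
  map_comp_comul := hRB.1.symm

def coalgHom₂ (hRB : IsRBSystem B₁ B₂) : H →ₗc[F] H where
  toLinearMap := B₂
  counit_comp := hRB.2.2.2.1
  map_comp_comul := hRB.2.2.1.symm

lemma mul_TL_mul_eq_one (hRB : IsRBSystem B₁ B₂) :
    toConv B₁ * toConv (TL B₁ B₂) * toConv (antipode F ∘ₗ B₂) = 1 := by
  have h₁ : toConv B₁ * toConv (antipode F ∘ₗ B₁) = 1 := hRB.coalgHom₁.mul_antipode_comp_self
  have h₂ : toConv B₂ * toConv (antipode F ∘ₗ B₂) = 1 := hRB.coalgHom₂.mul_antipode_comp_self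
  rw [toConv_TL, ← mul_assoc, h₁, one_mul, h₂]

lemma mul_cocycleL_mul_eq_one (hRB : IsRBSystem B₁ B₂) :
    toConv (antipode F ∘ₗ B₁) * toConv (cocycleL B₁ B₂) * toConv B₂ = 1 := by
  have h₁ : toConv (antipode F ∘ₗ B₁) * toConv B₁ = 1 := hRB.coalgHom₁.antipode_comp_mul_self
  have h₂ : toConv (antipode F ∘ₗ B₂) * toConv B₂ = 1 := hRB.coalgHom₂.antipode_comp_mul_self
  rw [toConv_cocycleL, ← mul_assoc, h₁, one_mul, h₂]

lemma left_comp_cocycleL (hRB : IsRBSystem B₁ B₂) : B₁ ∘ₗ cocycleL B₁ B₂ = B₁ :=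
  comp_cocycleL_of_mul hRB.2.2.2.2.2.2.1 hRB.2.2.2.2.1

lemma right_comp_cocycleL (hRB : IsRBSystem B₁ B₂) : B₂ ∘ₗ cocycleL B₁ B₂ = B₂ :=
  comp_cocycleL_of_mul hRB.2.2.2.2.2.2.2 hRB.2.2.2.2.2.1

variable [IsCocomm F H]

noncomputable def cocycleCoalgHom (hRB : IsRBSystem B₁ B₂) : H →ₗc[F] H :=
  { hRB.coalgHom₁.convMul ((antipodeCoalgHom F H).comp hRB.coalgHom₂) with
    toLinearMap := cocycleL B₁ B₂ }

lemma coe_cocycleCoalgHom (hRB : IsRBSystem B₁ B₂) :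
    hRB.cocycleCoalgHom.toLinearMap = cocycleL B₁ B₂ := rfl

noncomputable def tlCoalgHom (hRB : IsRBSystem B₁ B₂) : H →ₗc[F] H :=
  { ((antipodeCoalgHom F H).comp hRB.coalgHom₁).convMul hRB.coalgHom₂ with
    toLinearMap := TL B₁ B₂ }

lemma comp_TL_of_mul (hRB : IsRBSystem B₁ B₂) (B : H →ₗc[F] H)
    (hB : ∀ a b, B a * B b = B (circ B₁ B₂ a b)) (hB₁ : B 1 = 1) :
    B.toLinearMap ∘ₗ TL B₁ B₂ = antipode F ∘ₗ B.toLinearMap := by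
  have hinv : toConv B.toLinearMap * toConv (B.toLinearMap ∘ₗ TL B₁ B₂) = 1 := by
    rw [toConv_mul_toConv_comp_of_mul hB, circL_comp_map_comul B₁ B₂ .id _ (by simp),
      comp_id, comp_id, hRB.mul_TL_mul_eq_one]
    ext a
    simp [Algebra.algebraMap_eq_smul_one, hB₁]
  exact congrArg ofConv (left_inv_eq_right_inv B.antipode_comp_mul_self hinv).symm

lemma left_comp_TL (hRB : IsRBSystem B₁ B₂) : B₁ ∘ₗ TL B₁ B₂ = antipode F ∘ₗ B₁ :=
  hRB.comp_TL_of_mul hRB.coalgHom₁ hRB.2.2.2.2.2.2.1 hRB.2.2.2.2.1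

lemma right_comp_TL (hRB : IsRBSystem B₁ B₂) : B₂ ∘ₗ TL B₁ B₂ = antipode F ∘ₗ B₂ :=
  hRB.comp_TL_of_mul hRB.coalgHom₂ hRB.2.2.2.2.2.2.2 hRB.2.2.2.2.2.1

lemma TL_comp_cocycleL (hRB : IsRBSystem B₁ B₂) : TL B₁ B₂ ∘ₗ cocycleL B₁ B₂ = TL B₁ B₂ := by
  have h := convMul_comp_coalgHom_distrib (toConv (antipode F ∘ₗ B₁)) (toConv B₂)
    hRB.cocycleCoalgHom
  rw [← toConv_TL, ofConv_toConv, ofConv_toConv, ofConv_toConv, coe_cocycleCoalgHom, comp_assoc,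
    hRB.left_comp_cocycleL, hRB.right_comp_cocycleL, ← toConv_TL, ofConv_toConv] at h
  exact h

lemma cocycleL_comp_TL (hRB : IsRBSystem B₁ B₂) : cocycleL B₁ B₂ ∘ₗ TL B₁ B₂ = TL B₁ B₂ :=
  toConv_injective <| calc
    toConv (cocycleL B₁ B₂ ∘ₗ TL B₁ B₂)
      = toConv (B₁ ∘ₗ TL B₁ B₂) * toConv ((antipode F ∘ₗ B₂) ∘ₗ TL B₁ B₂) :=
        congrArg toConv
          (convMul_comp_coalgHom_distrib (toConv B₁) (toConv (antipode F ∘ₗ B₂)) hRB.tlCoalgHom)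
    _ = toConv (TL B₁ B₂) := by
        rw [comp_assoc, hRB.left_comp_TL, hRB.right_comp_TL, ← comp_assoc, antipode_comp_antipode,
          id_comp, toConv_TL]

lemma circL_comp_map_cocycleL_TL (hRB : IsRBSystem B₁ B₂) :
    circL B₁ B₂ ∘ₗ map (cocycleL B₁ B₂) (TL B₁ B₂ ∘ₗ cocycleL B₁ B₂) ∘ₗ comul =
      (1 : WithConv (H →ₗ[F] H)).ofConv := by
  rw [hRB.TL_comp_cocycleL,
    circL_comp_map_comul B₁ B₂ (cocycleL B₁ B₂) _ hRB.cocycleCoalgHom.map_comp_comul,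
    hRB.left_comp_cocycleL, hRB.right_comp_cocycleL, hRB.mul_TL_mul_eq_one]

lemma circL_comp_map_TL_cocycleL (hRB : IsRBSystem B₁ B₂) :
    circL B₁ B₂ ∘ₗ map (TL B₁ B₂ ∘ₗ cocycleL B₁ B₂) (cocycleL B₁ B₂) ∘ₗ comul =
      (1 : WithConv (H →ₗ[F] H)).ofConv := by
  rw [hRB.TL_comp_cocycleL,
    circL_comp_map_comul B₁ B₂ (TL B₁ B₂) _ hRB.tlCoalgHom.map_comp_comul,
    hRB.left_comp_TL, hRB.right_comp_TL, ← comp_assoc, antipode_comp_antipode, id_comp,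
    hRB.mul_cocycleL_mul_eq_one]

end IsRBSystem

end RotaBaxter

/-- `T(a) = S(B₁(a₁))B₂(a₂)` is an antipode for the descendent bialgebra structure on
`H₁ = Im(σ)`, making it a cocommutative Hopf algebra: `T` preserves `H₁` and
`σ(a₁) ∘ T(σ(a₂)) = ε(a)1 = T(σ(a₁)) ∘ σ(a₂)`. -/
theorem descendent_hopf
    (hcc : ∀ a : H, (TensorProduct.comm F H H) (Coalgebra.comul a) = Coalgebra.comul a)
    (B₁ B₂ : H →ₗ[F] H) (hRB : IsRBSystem B₁ B₂) :
    (∀ x ∈ LinearMap.range (cocycleL B₁ B₂),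
      TL B₁ B₂ x ∈ LinearMap.range (cocycleL B₁ B₂)) ∧
    (∀ a : H, circL B₁ B₂
        (TensorProduct.map (cocycleL B₁ B₂) (TL B₁ B₂ ∘ₗ cocycleL B₁ B₂)
          (Coalgebra.comul a)) =
      algebraMap F H (Coalgebra.counit (R := F) a)) ∧
    (∀ a : H, circL B₁ B₂
        (TensorProduct.map (TL B₁ B₂ ∘ₗ cocycleL B₁ B₂) (cocycleL B₁ B₂)
          (Coalgebra.comul a)) =
      algebraMap F H (Coalgebra.counit (R := F) a)) := by
  have : IsCocomm F H := ⟨LinearMap.ext hcc⟩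
  refine ⟨?_, fun a => congr($hRB.circL_comp_map_cocycleL_TL a),
    fun a => congr($hRB.circL_comp_map_TL_cocycleL a)⟩
  rintro _ ⟨b, rfl⟩
  exact ⟨TL B₁ B₂ b, by
    rw [← comp_apply, hRB.cocycleL_comp_TL, ← comp_apply, hRB.TL_comp_cocycleL]⟩
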